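/- arXiv:2107.02204 — 6 statements merged into one kernel-verified Lean document; each statement's English description precedes it below -/
import Mathlib

section
/- For integers b_1 ≥ b_2 ≥ ... ≥ b_r ≥ 0, the sequence of integers b_j in the expression p(t) = Σ_{j=1}^r C(t + b_j - j + 1, b_j) is uniquely determined by the polynomial p; that is, if two such weakly decreasing nonnegative sequences give the same polynomial, then the sequences are equal. -/
/-!
The top-degree coefficient of `Σ_j C(t + b_j - j + 1, b_j)` is `m/b_1!` where `m` is the number
of `j` with `b_j = b_1`, so the polynomial determines `b_1` (and whether `r = 0`). Peeling off the
first summand, the rest is the Gotzmann sum of `b_2 ≥ … ≥ b_r` shifted by `t ↦ t - 1`, and the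
shift is invertible, so induction on `r` finishes.
-/

/-- The polynomial binomial coefficient `C(t+a, b) ∈ ℚ[t]`. -/
noncomputable def pbinom (a : ℤ) (b : ℕ) : Polynomial ℚ :=
  (b.factorial : ℚ)⁻¹ • ∏ k ∈ Finset.range b, (Polynomial.X + Polynomial.C ((a : ℚ) - (k : ℚ)))

/-- The Gotzmann sum `Σ_{j=1}^r C(t + b_j - j + 1, b_j)` (here indexed from `j = 0`). -/
noncomputable def gotz (r : ℕ) (b : ℕ → ℕ) : Polynomial ℚ :=
  ∑ j ∈ Finset.range r, pbinom ((b j : ℤ) - (j : ℤ)) (b j)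

open Polynomial

section pbinom

variable (a : ℤ) (b : ℕ)

lemma monic_prod_X_add_C_sub :
    (∏ k ∈ Finset.range b, (X + C ((a : ℚ) - (k : ℚ)))).Monic :=
  monic_prod_of_monic _ _ fun _ _ => monic_X_add_C _

lemma natDegree_prod_X_add_C_sub :
    (∏ k ∈ Finset.range b, (X + C ((a : ℚ) - (k : ℚ)))).natDegree = b := by
  rw [natDegree_prod_of_monic _ _ fun _ _ => monic_X_add_C _]
  simp only [natDegree_X_add_C, Finset.sum_const, Finset.card_range, smul_eq_mul, mul_one]

lemma pbinom_coeff_self : (pbinom a b).coeff b = (b.factorial : ℚ)⁻¹ := by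
  have h := (monic_prod_X_add_C_sub a b).coeff_natDegree
  rw [natDegree_prod_X_add_C_sub] at h
  rw [pbinom, coeff_smul, h, smul_eq_mul, mul_one]

lemma pbinom_coeff_of_lt {m : ℕ} (hm : b < m) : (pbinom a b).coeff m = 0 := by
  rw [pbinom, coeff_smul, coeff_eq_zero_of_natDegree_lt (by rwa [natDegree_prod_X_add_C_sub]),
    smul_zero]

lemma taylor_neg_one_pbinom : taylor (-1) (pbinom a b) = pbinom (a - 1) b := by
  simp only [pbinom, LinearMap.map_smul, taylor_apply, prod_comp, add_comp, X_comp, C_comp]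
  congr 1
  refine Finset.prod_congr rfl fun k _ => ?_
  push_cast
  rw [add_assoc, ← C_add]
  ring_nf

end pbinom

section gotz

variable {r : ℕ} {b : ℕ → ℕ}

lemma gotz_coeff_of_lt (hmax : ∀ j < r, b j ≤ b 0) {m : ℕ} (hm : b 0 < m) :
    (gotz r b).coeff m = 0 := by
  rw [gotz, finsetSum_coeff]
  exact Finset.sum_eq_zero fun j hj =>
    pbinom_coeff_of_lt _ _ ((hmax j (Finset.mem_range.mp hj)).trans_lt hm)

lemma gotz_coeff_pos (hr : 0 < r) (hmax : ∀ j < r, b j ≤ b 0) :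
    0 < (gotz r b).coeff (b 0) := by
  rw [gotz, finsetSum_coeff]
  refine Finset.sum_pos' (fun j hj => ?_) ⟨0, Finset.mem_range.mpr hr, ?_⟩
  · rcases (hmax j (Finset.mem_range.mp hj)).lt_or_eq with hlt | heq
    · rw [pbinom_coeff_of_lt _ _ hlt]
    · rw [← heq, pbinom_coeff_self]
      positivity
  · rw [pbinom_coeff_self]
    positivity

lemma gotz_ne_zero (hr : 0 < r) (hmax : ∀ j < r, b j ≤ b 0) : gotz r b ≠ 0 := fun h0 =>
  (gotz_coeff_pos hr hmax).ne' (by rw [h0, coeff_zero])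

lemma natDegree_gotz (hr : 0 < r) (hmax : ∀ j < r, b j ≤ b 0) :
    (gotz r b).natDegree = b 0 :=
  natDegree_eq_of_le_of_coeff_ne_zero
    (natDegree_le_iff_coeff_eq_zero.mpr fun _ hm => gotz_coeff_of_lt hmax (by exact_mod_cast hm))
    (gotz_coeff_pos hr hmax).ne'

lemma gotz_succ (r : ℕ) (b : ℕ → ℕ) :
    gotz (r + 1) b = taylor (-1) (gotz r (fun j => b (j + 1))) + pbinom (b 0) (b 0) := by
  rw [gotz, Finset.sum_range_succ', gotz, map_sum]
  congr 1
  refine Finset.sum_congr rfl fun j _ => ?_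
  rw [taylor_neg_one_pbinom]
  push_cast
  ring_nf

end gotz

/-- Uniqueness of Gotzmann expressions: two weakly decreasing nonnegative sequences
giving the same polynomial are equal. -/
theorem gotzmann_unique (r s : ℕ) (b c : ℕ → ℕ)
    (hb : ∀ i j : ℕ, i ≤ j → j < r → b j ≤ b i)
    (hc : ∀ i j : ℕ, i ≤ j → j < s → c j ≤ c i)
    (h : gotz r b = gotz s c) :
    r = s ∧ ∀ j < r, b j = c j := by
  induction r generalizing s b c with
  | zero =>
    cases s with
    | zero => exact ⟨rfl, by simp⟩
    | succ s =>
      exact absurd (h.symm.trans (by simp [gotz]))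
        (gotz_ne_zero s.succ_pos fun j hj => hc 0 j j.zero_le hj)
  | succ r ih =>
    have hbmax : ∀ j < r + 1, b j ≤ b 0 := fun j hj => hb 0 j j.zero_le hj
    cases s with
    | zero => exact absurd (h.trans (by simp [gotz])) (gotz_ne_zero r.succ_pos hbmax)
    | succ s =>
      have hcmax : ∀ j < s + 1, c j ≤ c 0 := fun j hj => hc 0 j j.zero_le hj
      have hb0 : b 0 = c 0 := by
        rw [← natDegree_gotz r.succ_pos hbmax, h, natDegree_gotz s.succ_pos hcmax]
      rw [gotz_succ, gotz_succ, hb0, add_left_inj, (taylor_injective _).eq_iff] at h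
      obtain ⟨rfl, htail⟩ := ih s _ _ (fun i j hij hj => hb (i + 1) (j + 1) (by omega) (by omega))
        (fun i j hij hj => hc (i + 1) (j + 1) (by omega) (by omega)) h
      refine ⟨rfl, fun j hj => ?_⟩
      cases j with
      | zero => exact hb0
      | succ j => exact htail j (by omega)
end

section
/- Let p have Gotzmann partition (b_1, ..., b_r) and Macaulay expression p(t) = Σ_{i=0}^d [C(t+i, i+1) - C(t+i-e_i, i+1)] with e_0 ≥ e_1 ≥ ... ≥ e_d > 0. Then r = e_0 and the partition (b_1, ..., b_r) is conjugate to the partition (e_1, ..., e_d); in particular, (b_1, ..., b_r) has exactly e_i - e_{i+1} parts equal to i for all 0 ≤ i ≤ d (with e_{d+1} := 0). -/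
open Polynomial Finset

namespace Polynomial

variable {R : Type*} [Ring R] {f : ℕ → ℕ → R[X]}

theorem coeff_sum_range_of_le (hdeg : ∀ j n, (f j n).natDegree ≤ n) {r n : ℕ} {b : ℕ → ℕ}
    (hb : ∀ j < r, b j ≤ n) :
    (∑ j ∈ range r, f j (b j)).coeff n = ∑ j ∈ range r with b j = n, (f j n).coeff n := by
  rw [finsetSum_coeff, sum_filter]
  refine sum_congr rfl fun j hj => ?_
  split_ifs with hjn
  · rw [hjn]
  · exact coeff_eq_zero_of_natDegree_lt <|
      (hdeg j (b j)).trans_lt ((hb j (mem_range.1 hj)).lt_of_ne hjn)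

variable [PartialOrder R] [IsOrderedAddMonoid R]

theorem coeff_sum_range_pos (hdeg : ∀ j n, (f j n).natDegree ≤ n)
    (hlead : ∀ j n, 0 < (f j n).coeff n) {r : ℕ} {b : ℕ → ℕ} (hb : AntitoneOn b (Set.Iio r))
    (hr : 0 < r) : 0 < (∑ j ∈ range r, f j (b j)).coeff (b 0) := by
  have hle : ∀ j < r, b j ≤ b 0 := fun j hj => hb hr hj (Nat.zero_le j)
  rw [coeff_sum_range_of_le hdeg hle]
  exact sum_pos (fun j _ => hlead j _) ⟨0, by simp [hr]⟩

theorem natDegree_sum_range (hdeg : ∀ j n, (f j n).natDegree ≤ n)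
    (hlead : ∀ j n, 0 < (f j n).coeff n) {r : ℕ} {b : ℕ → ℕ} (hb : AntitoneOn b (Set.Iio r))
    (hr : 0 < r) : (∑ j ∈ range r, f j (b j)).natDegree = b 0 :=
  natDegree_eq_of_le_of_coeff_ne_zero
    (natDegree_sum_le_of_forall_le _ _ fun j hj =>
      (hdeg j (b j)).trans (hb hr (mem_range.1 hj) (Nat.zero_le j)))
    (coeff_sum_range_pos hdeg hlead hb hr).ne'

theorem sum_range_ne_zero (hdeg : ∀ j n, (f j n).natDegree ≤ n)
    (hlead : ∀ j n, 0 < (f j n).coeff n) {r : ℕ} {b : ℕ → ℕ} (hb : AntitoneOn b (Set.Iio r))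
    (hr : 0 < r) : ∑ j ∈ range r, f j (b j) ≠ 0 := fun h0 => by
  simpa [h0] using coeff_sum_range_pos hdeg hlead hb hr

theorem eq_of_sum_range_eq (hdeg : ∀ j n, (f j n).natDegree ≤ n)
    (hlead : ∀ j n, 0 < (f j n).coeff n) {r r' : ℕ} {b c : ℕ → ℕ}
    (hb : AntitoneOn b (Set.Iio r)) (hc : AntitoneOn c (Set.Iio r'))
    (h : ∑ j ∈ range r, f j (b j) = ∑ j ∈ range r', f j (c j)) :
    r = r' ∧ Set.EqOn b c (Set.Iio r) := by
  induction r generalizing f r' b c with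
  | zero =>
    obtain rfl | hr' := r'.eq_zero_or_pos
    · simp
    · exact absurd h.symm (by simpa using sum_range_ne_zero hdeg hlead hc hr')
  | succ r ih =>
    obtain rfl | hr' := r'.eq_zero_or_pos
    · exact absurd h (by simpa using sum_range_ne_zero hdeg hlead hb r.succ_pos)
    obtain ⟨r', rfl⟩ := Nat.exists_eq_add_one_of_ne_zero hr'.ne'
    have h0 : b 0 = c 0 := by
      rw [← natDegree_sum_range hdeg hlead hb r.succ_pos, h,
        natDegree_sum_range hdeg hlead hc hr']
    rw [sum_range_succ', sum_range_succ', h0, add_left_inj] at h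
    obtain ⟨rfl, htail⟩ := ih (f := fun j => f (j + 1)) (fun j => hdeg _) (fun j => hlead _)
      (fun i hi j hj hij => hb (by simpa using hi) (by simpa using hj) (by omega))
      (fun i hi j hj hij => hc (by simpa using hi) (by simpa using hj) (by omega)) h
    refine ⟨rfl, fun j hj => ?_⟩
    cases j with
    | zero => exact h0
    | succ j => exact htail (by simpa using hj)

end Polynomial

theorem pbinom_zero (a : ℤ) : pbinom a 0 = 1 := by
  simp [pbinom]

theorem natDegree_prod_X_add_C (a : ℤ) (n : ℕ) :
    (∏ k ∈ range n, (X + C ((a : ℚ) - k))).natDegree = n := by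
  rw [natDegree_prod_of_monic _ _ fun k _ => monic_X_add_C _]
  simp only [natDegree_X_add_C, sum_const, card_range, smul_eq_mul, mul_one]

theorem natDegree_pbinom_le (a : ℤ) (n : ℕ) : (pbinom a n).natDegree ≤ n :=
  (natDegree_smul_le _ _).trans (natDegree_prod_X_add_C a n).le

theorem coeff_pbinom_self (a : ℤ) (n : ℕ) : (pbinom a n).coeff n = (n.factorial : ℚ)⁻¹ := by
  have hmonic : (∏ k ∈ range n, (X + C ((a : ℚ) - k))).Monic :=
    monic_prod_of_monic _ _ fun k _ => monic_X_add_C _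
  have hlead := hmonic.coeff_natDegree
  rw [natDegree_prod_X_add_C] at hlead
  rw [pbinom, coeff_smul, hlead, smul_eq_mul, mul_one]

theorem pbinom_succ (a : ℤ) (n : ℕ) :
    pbinom a (n + 1) = pbinom (a - 1) (n + 1) + pbinom (a - 1) n := by
  set P := ∏ k ∈ range n, (X + C (((a - 1 : ℤ) : ℚ) - k))
  have hfirst : ∏ k ∈ range (n + 1), (X + C ((a : ℚ) - k)) = P * (X + C (a : ℚ)) := by
    rw [prod_range_succ']
    congr 1
    · exact prod_congr rfl fun k _ => by push_cast; ring_nf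
    · simp
  have hlast : ∏ k ∈ range (n + 1), (X + C (((a - 1 : ℤ) : ℚ) - k)) =
      P * (X + C (((a - 1 : ℤ) : ℚ) - n)) := prod_range_succ _ _
  have hX : X + C (a : ℚ) = X + C (((a - 1 : ℤ) : ℚ) - n) + C ((n : ℚ) + 1) := by
    rw [add_assoc, ← C_add]; push_cast; ring_nf
  have hfact : C (((n + 1).factorial : ℚ)⁻¹) * C ((n : ℚ) + 1) = C ((n.factorial : ℚ)⁻¹) := by
    rw [← C_mul, Nat.factorial_succ, Nat.cast_mul, Nat.cast_succ, mul_inv, mul_comm,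
      ← mul_assoc, mul_inv_cancel₀ (by positivity), one_mul]
  rw [pbinom, pbinom, pbinom, hfirst, hlast, hX, smul_eq_C_mul, smul_eq_C_mul, smul_eq_C_mul]
  linear_combination P * hfact

theorem pbinom_sub_pbinom_eq_sum (a : ℤ) (n m : ℕ) :
    pbinom a (n + 1) - pbinom (a - m) (n + 1) = ∑ j ∈ range m, pbinom (a - 1 - j) n := by
  induction m with
  | zero => simp
  | succ m ih =>
    rw [sum_range_succ, ← ih, pbinom_succ (a - m)]
    push_cast
    ring_nf

theorem pbinom_sub_eq_sum (c : ℕ) (x : ℤ) :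
    pbinom (c - x) c = ∑ i ∈ range (c + 1), pbinom (i - 1 - x) i := by
  induction c with
  | zero => simp [pbinom_zero]
  | succ c ih =>
    rw [sum_range_succ, ← ih, pbinom_succ]
    push_cast
    ring_nf

theorem gotz_injective {r r' : ℕ} {b c : ℕ → ℕ} (hb : AntitoneOn b (Set.Iio r))
    (hc : AntitoneOn c (Set.Iio r')) (h : gotz r b = gotz r' c) :
    r = r' ∧ Set.EqOn b c (Set.Iio r) :=
  eq_of_sum_range_eq (f := fun j n => pbinom ((n : ℤ) - j) n)
    (fun j n => natDegree_pbinom_le _ n)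
    (fun j n => by rw [coeff_pbinom_self]; positivity) hb hc h

/-- The conjugate of the partition `(e 1, …, e d)`, padded with zero parts. -/
def conjugate (e : ℕ → ℕ) (d j : ℕ) : ℕ :=
  #{k ∈ Icc 1 d | j < e k}

theorem conjugate_antitone (e : ℕ → ℕ) (d : ℕ) : Antitone (conjugate e d) :=
  fun _ _ hij => card_le_card <| monotone_filter_right _ fun _ _ => hij.trans_lt

theorem le_conjugate_iff {e : ℕ → ℕ} {d : ℕ} (he : AntitoneOn e (Set.Iic d)) {i j : ℕ}
    (hj : j < e 0) : i ≤ conjugate e d j ↔ i ≤ d ∧ j < e i := by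
  constructor
  · intro hi
    have hcard : conjugate e d j ≤ d := (card_filter_le _ _).trans (by simp)
    refine ⟨hi.trans hcard, ?_⟩
    obtain rfl | hi0 := i.eq_zero_or_pos
    · exact hj
    by_contra! hei
    have hsub : {k ∈ Icc 1 d | j < e k} ⊆ Icc 1 (i - 1) := fun k hk => by
      simp only [mem_filter, mem_Icc] at hk ⊢
      refine ⟨hk.1.1, Nat.le_sub_one_of_lt (lt_of_not_ge fun hik => ?_)⟩
      exact ((he (by simp; omega) (by simpa using hk.1.2) hik).trans hei).not_gt hk.2
    have := card_le_card hsub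
    simp only [Nat.card_Icc] at this
    unfold conjugate at hi
    omega
  · rintro ⟨hid, hji⟩
    have hsub : Icc 1 i ⊆ {k ∈ Icc 1 d | j < e k} := fun k hk => by
      simp only [mem_filter, mem_Icc] at hk ⊢
      exact ⟨⟨hk.1, hk.2.trans hid⟩, hji.trans_le (he (by simp; omega) (by simpa using hid) hk.2)⟩
    simpa [conjugate] using card_le_card hsub

theorem sum_macaulay_eq_gotz_conjugate {e : ℕ → ℕ} {d : ℕ} (he : AntitoneOn e (Set.Iic d)) :
    ∑ i ∈ range (d + 1), (pbinom i (i + 1) - pbinom (i - e i) (i + 1)) =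
      gotz (e 0) (conjugate e d) := by
  simp_rw [pbinom_sub_pbinom_eq_sum, gotz, pbinom_sub_eq_sum]
  refine (sum_comm' fun j i => ?_).symm
  simp only [mem_range, Nat.lt_add_one_iff]
  constructor
  · rintro ⟨hj, hi⟩
    exact ((le_conjugate_iff he hj).1 hi).symm
  · rintro ⟨hji, hid⟩
    have hj : j < e 0 := hji.trans_le (he (by simp) (by simpa using hid) (Nat.zero_le i))
    exact ⟨hj, (le_conjugate_iff he hj).2 ⟨hid, hji⟩⟩

theorem card_filter_conjugate_eq {e : ℕ → ℕ} {d i : ℕ} (he : AntitoneOn e (Set.Iic d))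
    (hi : i ≤ d) :
    #{j ∈ range (e 0) | conjugate e d j = i} = e i - if i < d then e (i + 1) else 0 := by
  rw [← Nat.card_Ico]
  congr 1
  ext j
  simp only [mem_filter, mem_range, mem_Ico]
  by_cases hj : j < e 0
  · have hle := le_conjugate_iff he (i := i) hj
    have hsucc := le_conjugate_iff he (i := i + 1) hj
    split_ifs <;> omega
  · have : e i ≤ e 0 := he (by simp) (by simpa using hi) (Nat.zero_le i)
    omega

theorem gotzmann_macaulay_conjugate_general (r d : ℕ) (b e : ℕ → ℕ)
    (hb : ∀ i j : ℕ, i ≤ j → j < r → b j ≤ b i)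
    (he : ∀ i j : ℕ, i ≤ j → j ≤ d → e j ≤ e i)
    (h : gotz r b =
      ∑ i ∈ Finset.range (d + 1), (pbinom (i : ℤ) (i + 1) - pbinom ((i : ℤ) - (e i : ℤ)) (i + 1))) :
    r = e 0 ∧ ∀ i ≤ d,
      ((Finset.range r).filter (fun j => b j = i)).card = e i - (if i < d then e (i + 1) else 0) := by
  have he' : AntitoneOn e (Set.Iic d) := fun i _ j hj hij => he i j hij hj
  rw [sum_macaulay_eq_gotz_conjugate he'] at h
  obtain ⟨rfl, hbc⟩ :=
    gotz_injective (fun i _ j hj hij => hb i j hij hj) ((conjugate_antitone e d).antitoneOn _) h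
  refine ⟨rfl, fun i hi => ?_⟩
  rw [← card_filter_conjugate_eq he' hi]
  exact congrArg card (filter_congr fun j hj => by rw [hbc (mem_range.1 hj)])

/-- If `p` has Gotzmann partition `(b_1, …, b_r)` and Macaulay expression with
`e_0 ≥ ⋯ ≥ e_d > 0`, then `r = e_0` and `(b_1, …, b_r)` is conjugate to
`(e_1, …, e_d)`: it has exactly `e_i - e_{i+1}` parts equal to `i`, for `0 ≤ i ≤ d`
(with `e_{d+1} := 0`). -/
theorem gotzmann_macaulay_conjugate (r d : ℕ) (b e : ℕ → ℕ)
    (hb : ∀ i j : ℕ, i ≤ j → j < r → b j ≤ b i)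
    (he : ∀ i j : ℕ, i ≤ j → j ≤ d → e j ≤ e i)
    (hepos : ∀ i ≤ d, 0 < e i)
    (h : gotz r b =
      ∑ i ∈ Finset.range (d + 1), (pbinom (i : ℤ) (i + 1) - pbinom ((i : ℤ) - (e i : ℤ)) (i + 1))) :
    r = e 0 ∧ ∀ i ≤ d,
      ((Finset.range r).filter (fun j => b j = i)).card = e i - (if i < d then e (i + 1) else 0) :=
  gotzmann_macaulay_conjugate_general r d b e hb he h
end

section
/- Over a field K of characteristic p > 0, a monomial ideal I ⊆ K[x_0, ..., x_n] satisfying Pardue's criterion is Borel-fixed: if for each monomial x^u ∈ I, each pair i < j, and each k ≤_p u_j, one has x_j^{-k} x_i^k x^u ∈ I, then I is fixed by all invertible upper-triangular matrices acting linearly on the variables. -/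
open MvPolynomial

/-- A matrix is upper triangular if entries below the diagonal vanish. -/
def UpperTriangular {K : Type} [Field K] {m : ℕ} (γ : Matrix (Fin m) (Fin m) K) : Prop :=
  ∀ i j : Fin m, j < i → γ i j = 0

/-- The linear action of a matrix `γ` on the polynomial ring, `γ · x_j = Σ_i γ_{ij} x_i`. -/
noncomputable def borelAct {K : Type} [Field K] {m : ℕ} (γ : Matrix (Fin m) (Fin m) K) :
    MvPolynomial (Fin m) K →+* MvPolynomial (Fin m) K :=
  (aeval (fun j => ∑ i, C (γ i j) * X i)).toRingHom

/-- An ideal is Borel-fixed if it is fixed by every invertible upper-triangular matrix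
acting linearly on the variables. -/
def BorelFixed {K : Type} [Field K] {m : ℕ} (I : Ideal (MvPolynomial (Fin m) K)) : Prop :=
  ∀ γ : Matrix (Fin m) (Fin m) K, UpperTriangular γ → IsUnit γ.det →
    Ideal.map (borelAct γ) I = I

/-- A monomial ideal: with every polynomial it contains all of its monomials. -/
def IsMonomialIdeal {K : Type} [Field K] {m : ℕ} (I : Ideal (MvPolynomial (Fin m) K)) : Prop :=
  ∀ f ∈ I, ∀ u ∈ f.support, (monomial u 1 : MvPolynomial (Fin m) K) ∈ I

/-- The strong stability exchange condition: `m ∈ I`, `x_j ∣ m`, `i < j` imply `x_i m / x_j ∈ I`. -/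
def StronglyStable {K : Type} [Field K] {m : ℕ} (I : Ideal (MvPolynomial (Fin m) K)) : Prop :=
  ∀ u : Fin m →₀ ℕ, (monomial u 1 : MvPolynomial (Fin m) K) ∈ I →
    ∀ i j : Fin m, i < j → u j ≠ 0 →
      (monomial (u + Finsupp.single i 1 - Finsupp.single j 1) 1 : MvPolynomial (Fin m) K) ∈ I

/-- The saturation `(I : J^∞) = ⋃_k (I : J^k)`. -/
noncomputable def idealSat {R : Type} [CommRing R] (I J : Ideal R) : Ideal R :=
  ⨆ k : ℕ, Submodule.colon I ((J ^ k : Ideal R) : Set R)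

/-- The irrelevant maximal ideal `⟨x_0, …, x_m⟩`. -/
noncomputable def irrelevant (m : ℕ) (K : Type) [Field K] : Ideal (MvPolynomial (Fin m) K) :=
  Ideal.span (Set.range X)

/-- The Hilbert function of `S/I`: the dimension of the image of the degree-`i`
homogeneous component in `S/I`. -/
noncomputable def hfn {K : Type} [Field K] {m : ℕ} (I : Ideal (MvPolynomial (Fin m) K))
    (i : ℕ) : ℕ :=
  Module.finrank K
    ((homogeneousSubmodule (Fin m) K i).map (Ideal.Quotient.mkₐ K I).toLinearMap)

/-- The set of (exponents of) minimal monomial generators of a monomial ideal. -/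
def minGens {K : Type} [Field K] {m : ℕ} (I : Ideal (MvPolynomial (Fin m) K)) :
    Set (Fin m →₀ ℕ) :=
  {u | (monomial u 1 : MvPolynomial (Fin m) K) ∈ I ∧
    ∀ v : Fin m →₀ ℕ, v ≤ u → v ≠ u → (monomial v 1 : MvPolynomial (Fin m) K) ∉ I}

/-- `k ≤_p ℓ`: every base-`p` digit of `k` is at most the corresponding digit of `ℓ`. -/
def baseLE (p k l : ℕ) : Prop :=
  ∀ i : ℕ, (Nat.digits p k).getD i 0 ≤ (Nat.digits p l).getD i 0

/-!
The invertible upper-triangular matrices form the monoid generated by the diagonal matrices and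
the transvections `x_j ↦ x_j + c x_i` with `i < j` (clear the off-diagonal entries column by
column, starting from the last one). The matrices `γ` with `γ · I ⊆ I` form a monoid, so it
suffices to check the generators on the monomials of `I`. A diagonal matrix rescales each
monomial. A transvection sends `x^u` to `Σ_k (u_j choose k) c^k x_j^{-k} x_i^k x^u`, and by
Lucas's theorem the binomial coefficient is nonzero in characteristic `p` only when
`k ≤_p u_j`, which is exactly when Pardue's criterion puts the monomial in `I`. Equality
follows by applying the inclusion to `γ⁻¹`, which is again upper triangular.
-/

theorem baseLE_of_not_dvd_choose {p N k : ℕ} (hp : p.Prime) (h : ¬ p ∣ N.choose k) :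
    baseLE p k N := by
  have := Fact.mk hp
  intro i
  rw [Nat.getD_digits _ _ hp.two_le, Nat.getD_digits _ _ hp.two_le]
  by_contra! hlt
  set a := max (max N k) i + 1
  have lt_pow_a : ∀ x ≤ max (max N k) i, x < p ^ a := fun x hx =>
    (Nat.lt_succ_of_le hx).trans (Nat.lt_pow_self hp.one_lt)
  have hlucas := Choose.choose_modEq_prod_range_choose_nat (p := p)
    (lt_pow_a N (by omega)) (lt_pow_a k (by omega))
  rw [Finset.prod_eq_zero (f := fun i => (N / p ^ i % p).choose (k / p ^ i % p))
    (Finset.mem_range.mpr (by omega)) (Nat.choose_eq_zero_of_lt hlt)] at hlucas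
  exact h (Nat.modEq_zero_iff_dvd.mp hlucas)

theorem MvPolynomial.monomial_erase_mul_X_pow_mul_X_pow {σ R : Type*} [CommSemiring R]
    {i j : σ} (hij : i ≠ j) (u : σ →₀ ℕ) {k : ℕ} (hk : k ≤ u j) :
    monomial (u.erase j) (1 : R) * X i ^ k * X j ^ (u j - k) =
      monomial (u + Finsupp.single i k - Finsupp.single j k) 1 := by
  classical
  rw [X_pow_eq_monomial, X_pow_eq_monomial, monomial_mul, monomial_mul, one_mul, one_mul]
  refine congrArg (fun v => monomial v (1 : R)) (Finsupp.ext fun l => ?_)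
  rcases eq_or_ne l j with rfl | hlj
  · simp [Finsupp.single_eq_of_ne' hij]
  · simp [Finsupp.erase_ne hlj, Finsupp.single_eq_of_ne' (Ne.symm hlj)]

namespace Matrix

variable {n K : Type*} [Fintype n] [DecidableEq n] [Field K]

open Classical in
noncomputable def offDiagSupport (γ : Matrix n n K) : Finset (n × n) :=
  Finset.univ.filter fun q => q.1 ≠ q.2 ∧ γ q.1 q.2 ≠ 0

theorem mem_offDiagSupport {γ : Matrix n n K} {q : n × n} :
    q ∈ γ.offDiagSupport ↔ q.1 ≠ q.2 ∧ γ q.1 q.2 ≠ 0 := by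
  simp [offDiagSupport]

theorem isDiag_of_offDiagSupport_eq_empty {γ : Matrix n n K} (h : γ.offDiagSupport = ∅) :
    γ.IsDiag := fun a b hab => by
  by_contra hγ
  simpa [h] using (mem_offDiagSupport (q := (a, b))).mpr ⟨hab, hγ⟩

section Elimination

variable {γ : Matrix n n K} {i j : n} (hrow : ∀ b ≠ j, γ j b = 0) (hjj : γ j j ≠ 0)
include hrow hjj

theorem transvection_mul_apply_of_row_eq_zero (a b : n) :
    (transvection i j (-(γ i j / γ j j)) * γ) a b = if a = i ∧ b = j then 0 else γ a b := by
  rcases eq_or_ne i a with rfl | ha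
  · rw [transvection_mul_apply_same]
    rcases eq_or_ne b j with rfl | hb
    · simp [hjj]
    · simp [hrow b hb, hb]
  · simp [transvection_mul_apply_of_ne i j a b ha.symm, ha.symm]

theorem offDiagSupport_transvection_mul_of_row_eq_zero :
    (transvection i j (-(γ i j / γ j j)) * γ).offDiagSupport =
      γ.offDiagSupport.erase (i, j) := by
  ext ⟨a, b⟩
  simp [mem_offDiagSupport, transvection_mul_apply_of_row_eq_zero hrow hjj, Prod.ext_iff]
  tauto

end Elimination

variable [LinearOrder n]

variable (n K) in
def borelGenerators : Set (Matrix n n K) :=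
  Set.range diagonal ∪ {γ | ∃ i j : n, i < j ∧ ∃ c, transvection i j c = γ}

theorem BlockTriangular.mem_closure_borelGenerators {γ : Matrix n n K}
    (hγ : γ.BlockTriangular id) (hdet : γ.det ≠ 0) :
    γ ∈ Submonoid.closure (borelGenerators n K) := by
  induction hN : γ.offDiagSupport.card using Nat.strong_induction_on generalizing γ with
  | _ N ih =>
  obtain hS | hS := γ.offDiagSupport.eq_empty_or_nonempty
  · rw [← (isDiag_of_offDiagSupport_eq_empty hS).diagonal_diag]
    exact Submonoid.subset_closure (Or.inl ⟨_, rfl⟩)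
  obtain ⟨⟨i, j⟩, hijS, hmax⟩ := Finset.exists_max_image _ Prod.snd hS
  obtain ⟨hij_ne, hγij⟩ := mem_offDiagSupport.mp hijS
  have hij : i < j := lt_of_le_of_ne (not_lt.mp fun h => hγij (hγ h)) hij_ne
  -- `j` is the last column with an entry off the diagonal, so row `j` is `γ j j • e_j`.
  have hrow : ∀ b ≠ j, γ j b = 0 := fun b hb => by
    by_contra h
    have hbj : b ≤ j := hmax (j, b) (mem_offDiagSupport.mpr ⟨Ne.symm hb, h⟩)
    exact h (hγ (lt_of_le_of_ne hbj hb))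
  have hjj : γ j j ≠ 0 := by
    rw [det_of_isUpperTriangular hγ] at hdet
    exact Finset.prod_ne_zero_iff.mp hdet j (Finset.mem_univ j)
  have hdecomp : γ = transvection i j (γ i j / γ j j) *
      (transvection i j (-(γ i j / γ j j)) * γ) := by
    rw [← Matrix.mul_assoc, transvection_mul_transvection_same _ _ hij.ne, add_neg_cancel,
      transvection_zero, Matrix.one_mul]
  rw [hdecomp]
  refine Submonoid.mul_mem _ (Submonoid.subset_closure (Or.inr ⟨i, j, hij, _, rfl⟩))
    (ih _ ?_ ?_ ?_ rfl)
  · rw [← hN, offDiagSupport_transvection_mul_of_row_eq_zero hrow hjj]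
    exact Finset.card_erase_lt_of_mem hijS
  · intro a b hab
    simp [transvection_mul_apply_of_row_eq_zero hrow hjj, hγ hab]
  · rwa [det_mul, det_transvection_of_ne _ _ hij.ne, one_mul]

end Matrix

open Matrix

section BorelAction

variable {K : Type} [Field K] {m : ℕ}

theorem borelAct_apply (γ : Matrix (Fin m) (Fin m) K) (f : MvPolynomial (Fin m) K) :
    borelAct γ f = aeval (fun j => ∑ i, C (γ i j) * X i) f :=
  rfl

theorem borelAct_C (γ : Matrix (Fin m) (Fin m) K) (r : K) : borelAct γ (C r) = C r := by
  rw [borelAct_apply, aeval_C, algebraMap_eq]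

theorem borelAct_X (γ : Matrix (Fin m) (Fin m) K) (j : Fin m) :
    borelAct γ (X j) = ∑ i, C (γ i j) * X i := by
  rw [borelAct_apply, aeval_X]

theorem borelAct_monomial_one (γ : Matrix (Fin m) (Fin m) K) (u : Fin m →₀ ℕ) :
    borelAct γ (monomial u 1) = u.prod fun l e => borelAct γ (X l) ^ e := by
  simp only [borelAct_apply, aeval_monomial, map_one, one_mul, aeval_X]

theorem borelAct_mul (γ δ : Matrix (Fin m) (Fin m) K) :
    borelAct (γ * δ) = (borelAct γ).comp (borelAct δ) := by
  refine MvPolynomial.ringHom_ext (fun r => by simp [borelAct_C]) fun j => ?_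
  simp only [RingHom.comp_apply, borelAct_X, map_sum, map_mul, borelAct_C, mul_apply,
    Finset.sum_mul, Finset.mul_sum]
  rw [Finset.sum_comm]
  exact Finset.sum_congr rfl fun _ _ => Finset.sum_congr rfl fun _ _ => by ring

theorem borelAct_diagonal_X (d : Fin m → K) (j : Fin m) :
    borelAct (diagonal d) (X j) = C (d j) * X j := by
  simp [borelAct_X, diagonal_apply, apply_ite C, ite_mul]

theorem borelAct_one : borelAct (1 : Matrix (Fin m) (Fin m) K) = RingHom.id _ :=
  MvPolynomial.ringHom_ext (borelAct_C 1) fun j => by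
    simp [← diagonal_one, borelAct_diagonal_X]

theorem borelAct_diagonal_monomial (d : Fin m → K) (u : Fin m →₀ ℕ) :
    borelAct (diagonal d) (monomial u 1) = C (u.prod fun l e => d l ^ e) * monomial u 1 := by
  simp [borelAct_diagonal_X, mul_pow, monomial_eq, Finset.prod_mul_distrib]

theorem borelAct_transvection_X (i j l : Fin m) (c : K) :
    borelAct (transvection i j c) (X l) = X l + if l = j then C c * X i else 0 := by
  simp [borelAct_X, transvection, one_apply, single_apply, add_mul, Finset.sum_add_distrib,
    apply_ite C, ite_mul, ite_and, @eq_comm _ j l]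

theorem borelAct_transvection_monomial (i j : Fin m) (c : K) (u : Fin m →₀ ℕ) :
    borelAct (transvection i j c) (monomial u 1) =
      monomial (u.erase j) 1 * (C c * X i + X j) ^ u j := by
  have hsplit : monomial u (1 : K) = monomial (u.erase j) 1 * X j ^ u j := by
    rw [X_pow_eq_monomial, monomial_mul, mul_one, Finsupp.erase_add_single]
  have hfix :
      borelAct (transvection i j c) (monomial (u.erase j) 1) = monomial (u.erase j) 1 := by
    rw [borelAct_monomial_one, monomial_eq, C_1, one_mul]
    refine Finsupp.prod_congr fun l hl => ?_
    rw [borelAct_transvection_X, if_neg (by rintro rfl; simp at hl), add_zero]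
  rw [hsplit, map_mul, map_pow, hfix, borelAct_transvection_X, if_pos rfl, add_comm]

end BorelAction

section Stabilizer

variable {K : Type} [Field K] {m : ℕ}

theorem IsMonomialIdeal.map_le_of_monomial_mem {I : Ideal (MvPolynomial (Fin m) K)}
    (hI : IsMonomialIdeal I)
    (φ : MvPolynomial (Fin m) K →+* MvPolynomial (Fin m) K)
    (hφ : ∀ u, (monomial u 1 : MvPolynomial (Fin m) K) ∈ I → φ (monomial u 1) ∈ I) :
    I.map φ ≤ I := by
  refine Ideal.map_le_iff_le_comap.mpr fun f hf => ?_
  rw [Ideal.mem_comap, ← f.support_sum_monomial_coeff, map_sum]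
  refine Ideal.sum_mem _ fun u hu => ?_
  rw [← mul_one (coeff u f), ← smul_eq_mul, ← smul_monomial, smul_eq_C_mul, map_mul]
  exact I.mul_mem_left _ (hφ u (hI f hf u hu))

def SatisfiesPardueCriterion (p : ℕ) (I : Ideal (MvPolynomial (Fin m) K)) : Prop :=
  ∀ u : Fin m →₀ ℕ, (monomial u 1 : MvPolynomial (Fin m) K) ∈ I →
    ∀ i j : Fin m, i < j → ∀ k : ℕ, baseLE p k (u j) →
      (monomial (u + Finsupp.single i k - Finsupp.single j k) 1 : MvPolynomial (Fin m) K) ∈ I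

theorem SatisfiesPardueCriterion.borelAct_transvection_monomial_mem {p : ℕ} (hp : p.Prime)
    [CharP K p] {I : Ideal (MvPolynomial (Fin m) K)} (hI : SatisfiesPardueCriterion p I)
    {i j : Fin m} (hij : i < j) (c : K) {u : Fin m →₀ ℕ}
    (hu : (monomial u 1 : MvPolynomial (Fin m) K) ∈ I) :
    borelAct (transvection i j c) (monomial u 1) ∈ I := by
  rw [borelAct_transvection_monomial, add_pow, Finset.mul_sum]
  refine Ideal.sum_mem _ fun k hk_mem => ?_
  have hk : k ≤ u j := Nat.lt_succ_iff.mp (Finset.mem_range.mp hk_mem)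
  have hterm : monomial (u.erase j) 1 *
      ((C c * X i) ^ k * X j ^ (u j - k) * ((u j).choose k : MvPolynomial (Fin m) K)) =
      C (c ^ k * (u j).choose k) * monomial (u + Finsupp.single i k - Finsupp.single j k) 1 := by
    rw [← monomial_erase_mul_X_pow_mul_X_pow hij.ne u hk, map_mul, map_pow, map_natCast]
    ring
  rw [hterm]
  by_cases hdvd : p ∣ (u j).choose k
  · rw [(CharP.cast_eq_zero_iff K p _).mpr hdvd, mul_zero, map_zero, zero_mul]
    exact I.zero_mem
  · exact I.mul_mem_left _ (hI u hu i j hij k (baseLE_of_not_dvd_choose hp hdvd))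

def borelStabilizer (I : Ideal (MvPolynomial (Fin m) K)) :
    Submonoid (Matrix (Fin m) (Fin m) K) where
  carrier := {γ | I.map (borelAct γ) ≤ I}
  one_mem' := by simp [borelAct_one]
  mul_mem' {γ δ} hγ hδ := by
    change I.map (borelAct (γ * δ)) ≤ I
    rw [borelAct_mul, ← Ideal.map_map]
    exact (Ideal.map_mono hδ).trans hγ

theorem borelGenerators_subset_borelStabilizer {p : ℕ} (hp : p.Prime) [CharP K p]
    {I : Ideal (MvPolynomial (Fin m) K)} (hmon : IsMonomialIdeal I)
    (hI : SatisfiesPardueCriterion p I) : borelGenerators (Fin m) K ⊆ borelStabilizer I := by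
  rintro _ (⟨d, rfl⟩ | ⟨i, j, hij, c, rfl⟩) <;>
    refine hmon.map_le_of_monomial_mem _ fun u hu => ?_
  · rw [borelAct_diagonal_monomial]
    exact I.mul_mem_left _ hu
  · exact hI.borelAct_transvection_monomial_mem hp hij c hu

end Stabilizer

/-- Pardue's criterion: over a field of characteristic `p > 0`, a monomial ideal such that
for each monomial `x^u ∈ I`, each pair `i < j`, and each `k ≤_p u_j`, also
`x_j^{-k} x_i^k x^u ∈ I`, is Borel-fixed. -/
theorem pardue_criterion_borelFixed {K : Type} [Field K] (p : ℕ) (hp : p.Prime)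
    [CharP K p] (n : ℕ) (I : Ideal (MvPolynomial (Fin (n + 1)) K))
    (hmon : IsMonomialIdeal I)
    (hpardue : ∀ u : Fin (n + 1) →₀ ℕ, (monomial u 1 : MvPolynomial (Fin (n + 1)) K) ∈ I →
      ∀ i j : Fin (n + 1), i < j → ∀ k : ℕ, baseLE p k (u j) →
        (monomial (u + Finsupp.single i k - Finsupp.single j k) 1 :
          MvPolynomial (Fin (n + 1)) K) ∈ I) :
    BorelFixed I := by
  have hstab : ∀ γ : Matrix (Fin (n + 1)) (Fin (n + 1)) K, γ.BlockTriangular id →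
      IsUnit γ.det → I.map (borelAct γ) ≤ I := fun γ hγ hdet =>
    Submonoid.closure_le.mpr (borelGenerators_subset_borelStabilizer hp hmon hpardue)
      (hγ.mem_closure_borelGenerators hdet.ne_zero)
  intro γ hγ hdet
  have := γ.invertibleOfIsUnitDet hdet
  refine le_antisymm (hstab γ hγ hdet) ?_
  calc I = (I.map (borelAct γ⁻¹)).map (borelAct γ) := by
        rw [Ideal.map_map, ← borelAct_mul, mul_nonsing_inv _ hdet, borelAct_one, Ideal.map_id]
    _ ≤ I.map (borelAct γ) := Ideal.map_mono <| hstab γ⁻¹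
        (blockTriangular_inv_of_blockTriangular hγ) (isUnit_nonsing_inv_det _ hdet)
end

section
/- Let L = L(a_0, ..., a_{n-1}) ⊂ K[x_0, ..., x_n] be the monomial ideal generated by x_0^{a_{n-1}+1}, x_0^{a_{n-1}} x_1^{a_{n-2}+1}, ..., x_0^{a_{n-1}} x_1^{a_{n-2}} ⋯ x_{n-2}^{a_1+1}, and x_0^{a_{n-1}} x_1^{a_{n-2}} ⋯ x_{n-2}^{a_1} x_{n-1}^{a_0}, for nonnegative integers a_0, ..., a_{n-1}. Then L is a lex-segment ideal: for every degree i, the monomials of degree i in L form an initial segment of the monomials of K[x_0,...,x_n]_i in lexicographic order. -/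
/-!
A monomial `x^v` lies in `L` iff `w_k ≤ v` for some generator exponent
`w_k = (b_0, …, b_{k-1}, c_k, 0, …, 0)`, where `b_t = a_{n-1-t}` and `c_k ∈ {b_k, b_k + 1}`.
Let `w_k ≤ u` and let `v` have the same degree as `u` and first exceed it at `i`; equal degrees
force `i ≠ n`. If `k < i`, then `v` agrees with `u` on the support of `w_k`. If `i ≤ k`, then
`v_i > u_i ≥ b_i`, hence `v_i ≥ c_i` and `w_i ≤ v`.
-/

open MvPolynomial

open Finsupp

theorem MvPolynomial.monomial_one_mem_span_monomial_image_iff {σ R : Type*} [CommSemiring R]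
    [Nontrivial R] {s : Set (σ →₀ ℕ)} {x : σ →₀ ℕ} :
    monomial x (1 : R) ∈ Ideal.span ((fun s => monomial s (1 : R)) '' s) ↔ ∃ si ∈ s, si ≤ x := by
  classical
  rw [mem_ideal_span_monomial_image, support_monomial, if_neg one_ne_zero]
  simp

theorem Fin.apply_last_eq_of_sum_eq {M : Type*} [AddCancelCommMonoid M] {n : ℕ}
    {u v : Fin (n + 1) → M} (hsum : ∑ i, u i = ∑ i, v i)
    (hagree : ∀ j < Fin.last n, u j = v j) : u (Fin.last n) = v (Fin.last n) := by
  rw [Fin.sum_univ_castSucc, Fin.sum_univ_castSucc,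
    Finset.sum_congr rfl fun t _ => hagree t.castSucc (Fin.castSucc_lt_last t)] at hsum
  exact add_left_cancel hsum

namespace LexSegment

variable {n : ℕ} (b c : Fin n → ℕ)

noncomputable def genExp (k : Fin n) : Fin (n + 1) →₀ ℕ :=
  (∑ t ∈ Finset.univ.filter (fun t : Fin n => t < k), single t.castSucc (b t)) +
    single k.castSucc (c k)

theorem monomial_genExp {R : Type*} [CommSemiring R] (k : Fin n) :
    monomial (genExp b c k) (1 : R) =
      (∏ t ∈ Finset.univ.filter (fun t : Fin n => t < k), (X t.castSucc : MvPolynomial _ R) ^ b t) *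
        X k.castSucc ^ c k := by
  simp only [genExp, X_pow_eq_monomial, ← monomial_sum_one, monomial_mul, mul_one]

theorem genExp_apply_castSucc (k t : Fin n) :
    genExp b c k t.castSucc = if t < k then b t else if t = k then c k else 0 := by
  simp only [genExp, Finsupp.add_apply, finsetSum_apply, single_apply, Fin.castSucc_inj,
    Finset.sum_ite_eq', Finset.mem_filter, Finset.mem_univ, true_and]
  rcases lt_trichotomy t k with h | rfl | h
  · simp [h, h.ne']
  · simp
  · simp [h.not_gt, h.ne, h.ne']

theorem genExp_apply_last (k : Fin n) : genExp b c k (Fin.last n) = 0 := by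
  simp only [genExp, Finsupp.add_apply, finsetSum_apply,
    single_eq_of_ne' (Fin.castSucc_lt_last _).ne, Finset.sum_const_zero, add_zero]

theorem genExp_le_iff {k : Fin n} {x : Fin (n + 1) →₀ ℕ} :
    genExp b c k ≤ x ↔ (∀ t < k, b t ≤ x t.castSucc) ∧ c k ≤ x k.castSucc := by
  simp only [Finsupp.le_def, Fin.forall_fin_succ', genExp_apply_castSucc, genExp_apply_last,
    zero_le, and_true]
  refine ⟨fun h => ⟨fun t ht => by simpa [ht] using h t, by simpa using h k⟩,
    fun ⟨hb, hc⟩ t => ?_⟩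
  split_ifs with ht htk
  · exact hb t ht
  · exact htk ▸ hc
  · exact Nat.zero_le _

variable {b c}

theorem exists_genExp_le_of_lex (hbc : ∀ k, b k ≤ c k) (hcb : ∀ k, c k ≤ b k + 1)
    {k : Fin n} {u v : Fin (n + 1) →₀ ℕ} (hsum : ∑ i, u i = ∑ i, v i) (hu : genExp b c k ≤ u)
    (hlex : ∃ i, u i < v i ∧ ∀ j < i, u j = v j) : ∃ k', genExp b c k' ≤ v := by
  obtain ⟨i, hlt, hagree⟩ := hlex
  obtain ⟨i, rfl⟩ : ∃ i' : Fin n, i'.castSucc = i := Fin.exists_castSucc_eq.2 fun h => by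
    subst h
    exact hlt.ne (Fin.apply_last_eq_of_sum_eq hsum hagree)
  have hagree' : ∀ t < i, u t.castSucc = v t.castSucc := fun t ht =>
    hagree _ (Fin.castSucc_lt_castSucc_iff.2 ht)
  rw [genExp_le_iff] at hu
  rcases le_or_gt i k with hik | hki
  · refine ⟨i, (genExp_le_iff b c).2 ⟨fun t ht => hagree' t ht ▸ hu.1 t (ht.trans_le hik), ?_⟩⟩
    have hbu : b i ≤ u i.castSucc := by
      rcases hik.lt_or_eq with h | rfl
      · exact hu.1 i h
      · exact (hbc i).trans hu.2
    have := hcb i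
    omega
  · exact ⟨k, (genExp_le_iff b c).2
      ⟨fun t ht => hagree' t (ht.trans hki) ▸ hu.1 t ht, hagree' k hki ▸ hu.2⟩⟩

end LexSegment

open LexSegment in
theorem L_is_lexSegment_general {K : Type} [Field K] (n : ℕ) (a : ℕ → ℕ)
    (L : Ideal (MvPolynomial (Fin (n + 1)) K))
    (hL : L = Ideal.span (Set.range (fun k : Fin n =>
      (∏ t ∈ Finset.univ.filter (fun t : Fin n => t < k),
          (X t.castSucc : MvPolynomial (Fin (n + 1)) K) ^ a (n - 1 - (t : ℕ))) *
        X k.castSucc ^ (a (n - 1 - (k : ℕ)) + if (k : ℕ) = n - 1 then 0 else 1)))) :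
    ∀ u v : Fin (n + 1) →₀ ℕ, (∑ i, u i) = (∑ i, v i) →
      (monomial u 1 : MvPolynomial (Fin (n + 1)) K) ∈ L →
      ((∃ i : Fin (n + 1), u i < v i ∧ ∀ k < i, u k = v k) ∨ u = v) →
      (monomial v 1 : MvPolynomial (Fin (n + 1)) K) ∈ L := by
  set b : Fin n → ℕ := fun k => a (n - 1 - k)
  set c : Fin n → ℕ := fun k => a (n - 1 - k) + if (k : ℕ) = n - 1 then 0 else 1
  have hmem : ∀ x, (monomial x 1 : MvPolynomial (Fin (n + 1)) K) ∈ L ↔ ∃ k, genExp b c k ≤ x := by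
    intro x
    rw [hL, ← funext (monomial_genExp b c), Set.range_comp' (fun s => monomial s (1 : K)),
      monomial_one_mem_span_monomial_image_iff]
    simp
  intro u v hsum hu hlex
  rcases hlex with hlex | rfl
  · obtain ⟨k, hk⟩ := (hmem u).1 hu
    exact (hmem v).2 <| exists_genExp_le_of_lex (fun _ => Nat.le_add_right _ _)
      (fun _ => by simp only [b]; split <;> omega) hsum hk hlex
  · exact hu

/-- The ideal `L(a_0, …, a_{n-1})` with generators
`x_0^{a_{n-1}+1}, x_0^{a_{n-1}} x_1^{a_{n-2}+1}, …, x_0^{a_{n-1}} ⋯ x_{n-2}^{a_1+1},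
x_0^{a_{n-1}} ⋯ x_{n-2}^{a_1} x_{n-1}^{a_0}` is a lex-segment ideal: in each degree, the
monomials it contains form an initial segment in lexicographic order (`x_0 > x_1 > ⋯ > x_n`). -/
theorem L_is_lexSegment {K : Type} [Field K] (n : ℕ) (hn : 1 ≤ n) (a : ℕ → ℕ)
    (L : Ideal (MvPolynomial (Fin (n + 1)) K))
    (hL : L = Ideal.span (Set.range (fun k : Fin n =>
      (∏ t ∈ Finset.univ.filter (fun t : Fin n => t < k),
          (X t.castSucc : MvPolynomial (Fin (n + 1)) K) ^ a (n - 1 - (t : ℕ))) *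
        X k.castSucc ^ (a (n - 1 - (k : ℕ)) + if (k : ℕ) = n - 1 then 0 else 1)))) :
    ∀ u v : Fin (n + 1) →₀ ℕ, (∑ i, u i) = (∑ i, v i) →
      (monomial u 1 : MvPolynomial (Fin (n + 1)) K) ∈ L →
      ((∃ i : Fin (n + 1), u i < v i ∧ ∀ k < i, u k = v k) ∨ u = v) →
      (monomial v 1 : MvPolynomial (Fin (n + 1)) K) ∈ L :=
  L_is_lexSegment_general n a L hL
end

section
/- Let I ⊂ K[x_0, ..., x_n] be a saturated strongly stable monomial ideal with expandable minimal generator g, and let I' be the expansion of I at g, i.e., the monomial ideal with generating set (G(I) \ {g}) ∪ {g x_j : max(g) ≤ j ≤ n-1}. Then the Hilbert polynomial of S/I' equals 1 + (Hilbert polynomial of S/I). -/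
open MvPolynomial

/-!
Every monomial of `I` is divisible by a minimal generator, and saturation together with strong
stability forces `x_n` not to divide any minimal generator. A multiple `w` of `g` that exceeds `g`
in some variable `x_j`, `j < n`, lies in `I'`: either `g x_j` is a new generator, or
`x_j g / x_t` (with `t > j`, `x_t ∣ g`) lies in `I` and is divisible by a minimal generator
other than `g`. So in each degree `d ≥ deg g` the only monomial of `I` outside `I'` is
`g x_n^(d - deg g)`, and since `I ⊇ I'` are monomial ideals, `S_d / I'_d` has exactly one more
dimension than `S_d / I_d`.
-/

section MonomialIdeals

variable {σ R : Type*} [CommSemiring R]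

lemma monomial_mem_ideal_span_monomial_image_iff [Nontrivial R] {s : Set (σ →₀ ℕ)}
    {w : σ →₀ ℕ} :
    monomial w (1 : R) ∈ Ideal.span ((fun u => monomial u (1 : R)) '' s) ↔
      ∃ u ∈ s, u ≤ w := by
  classical
  rw [mem_ideal_span_monomial_image, support_monomial, if_neg one_ne_zero]
  simp

lemma monomial_mem_of_le {I : Ideal (MvPolynomial σ R)} {u w : σ →₀ ℕ}
    (hu : monomial u (1 : R) ∈ I) (huw : u ≤ w) : monomial w (1 : R) ∈ I :=
  I.mem_of_dvd (monomial_dvd_monomial.mpr ⟨Or.inr huw, one_dvd 1⟩) hu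

lemma add_single_one_le {g w : σ →₀ ℕ} (hgw : g ≤ w) {j : σ}
    (hj : g j < w j) : g + Finsupp.single j 1 ≤ w := by
  intro a
  rcases eq_or_ne a j with rfl | ha
  · simpa using hj
  · simpa [Finsupp.single_eq_of_ne ha] using hgw a

end MonomialIdeals

section MinimalGenerators

variable {K : Type} [Field K] {m : ℕ}

lemma exists_mem_minGens_le {I : Ideal (MvPolynomial (Fin m) K)} {w : Fin m →₀ ℕ}
    (hw : (monomial w 1 : MvPolynomial (Fin m) K) ∈ I) : ∃ u ∈ minGens I, u ≤ w := by
  obtain ⟨u, ⟨huw, huI⟩, hmin⟩ := wellFounded_lt.has_min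
    {v | v ≤ w ∧ (monomial v 1 : MvPolynomial (Fin m) K) ∈ I} ⟨w, le_rfl, hw⟩
  refine ⟨u, ⟨huI, fun v hvu hne hvI => ?_⟩, huw⟩
  exact hmin v ⟨hvu.trans huw, hvI⟩ (lt_of_le_of_ne hvu hne)

end MinimalGenerators

section Saturation

variable {K : Type} [Field K] {n : ℕ} {I : Ideal (MvPolynomial (Fin (n + 1)) K)}

lemma StronglyStable.monomial_mem_of_add_single_last (hss : StronglyStable I)
    (hsat : idealSat I (irrelevant (n + 1) K) = I) {w : Fin (n + 1) →₀ ℕ}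
    (h : (monomial (w + Finsupp.single (Fin.last n) 1) 1 : MvPolynomial (Fin (n + 1)) K) ∈ I) :
    (monomial w 1 : MvPolynomial (Fin (n + 1)) K) ∈ I := by
  have hX : ∀ i, (monomial w 1 : MvPolynomial (Fin (n + 1)) K) * X i ∈ I := by
    intro i
    rw [X, monomial_mul, mul_one]
    rcases (Fin.le_last i).eq_or_lt with rfl | hi
    · exact h
    · simpa only [add_right_comm w, add_tsub_cancel_right] using
        hss _ h i (Fin.last n) hi (by simp)
  rw [← hsat]
  refine Submodule.mem_iSup_of_mem 1 ?_
  rw [pow_one, irrelevant, Ideal.colon_span]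
  exact Submodule.mem_colon.mpr (Set.forall_mem_range.mpr hX)

lemma minGens_apply_last_eq_zero (hss : StronglyStable I)
    (hsat : idealSat I (irrelevant (n + 1) K) = I) {u : Fin (n + 1) →₀ ℕ}
    (hu : u ∈ minGens I) : u (Fin.last n) = 0 := by
  by_contra h
  set v := u - Finsupp.single (Fin.last n) 1
  have hvu : v + Finsupp.single (Fin.last n) 1 = u :=
    tsub_add_cancel_of_le (Finsupp.single_le_iff.mpr (Nat.one_le_iff_ne_zero.mpr h))
  refine hu.2 v tsub_le_self (fun hv => ?_)
    (hss.monomial_mem_of_add_single_last hsat (hvu ▸ hu.1))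
  have := congrArg (· (Fin.last n)) hvu
  simp only [hv, Finsupp.add_apply, Finsupp.single_eq_same] at this
  omega

end Saturation

section Expansion

variable {K : Type} [Field K] {n : ℕ} {I : Ideal (MvPolynomial (Fin (n + 1)) K)}
  {g : Fin (n + 1) →₀ ℕ}

def expansionGens (I : Ideal (MvPolynomial (Fin (n + 1)) K)) (g : Fin (n + 1) →₀ ℕ) :
    Set (Fin (n + 1) →₀ ℕ) :=
  (minGens I \ {g}) ∪
    {v | ∃ j : Fin (n + 1), (∀ i : Fin (n + 1), g i ≠ 0 → i ≤ j) ∧ (j : ℕ) < n ∧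
      v = g + Finsupp.single j 1}

lemma span_expansionGens_le (hg : g ∈ minGens I) :
    Ideal.span ((fun u => (monomial u 1 : MvPolynomial (Fin (n + 1)) K)) '' expansionGens I g)
      ≤ I := by
  rw [Ideal.span_le]
  rintro _ ⟨u, hu | ⟨j, -, -, rfl⟩, rfl⟩
  · exact hu.1.1
  · exact monomial_mem_of_le hg.1 le_self_add

lemma not_le_add_single_last_of_mem_expansionGens (hss : StronglyStable I)
    (hsat : idealSat I (irrelevant (n + 1) K) = I) (hg : g ∈ minGens I)
    {u : Fin (n + 1) →₀ ℕ} (hu : u ∈ expansionGens I g) (k : ℕ) :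
    ¬ u ≤ g + Finsupp.single (Fin.last n) k := by
  intro hle
  rcases hu with ⟨hu, hug⟩ | ⟨j, -, hj, rfl⟩
  · refine hg.2 u (fun a => ?_) hug hu.1
    rcases eq_or_ne a (Fin.last n) with rfl | ha
    · simp [minGens_apply_last_eq_zero hss hsat hu]
    · simpa [Finsupp.single_eq_of_ne ha] using hle a
  · have hjl : j ≠ Fin.last n := Fin.ne_of_lt (Fin.lt_def.mpr hj)
    simpa [Finsupp.single_eq_of_ne hjl] using hle j

lemma exists_expansionGens_le_of_apply_lt (hss : StronglyStable I) (hg : g ∈ minGens I)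
    {w : Fin (n + 1) →₀ ℕ} (hgw : g ≤ w) {j : Fin (n + 1)} (hj : (j : ℕ) < n)
    (hjw : g j < w j) : ∃ u ∈ expansionGens I g, u ≤ w := by
  by_cases hmax : ∀ i, g i ≠ 0 → i ≤ j
  · exact ⟨_, Or.inr ⟨j, hmax, hj, rfl⟩, add_single_one_le hgw hjw⟩
  push Not at hmax
  obtain ⟨t, hgt, hjt⟩ := hmax
  obtain ⟨u, hu, hule⟩ := exists_mem_minGens_le (hss g hg.1 j t hjt hgt)
  have hug : u ≠ g := by
    rintro rfl
    have := hule t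
    simp only [Finsupp.tsub_apply, Finsupp.add_apply, Finsupp.single_eq_same,
      Finsupp.single_eq_of_ne' hjt.ne] at this
    omega
  exact ⟨u, Or.inl ⟨hu, hug⟩, hule.trans (tsub_le_self.trans (add_single_one_le hgw hjw))⟩

lemma exists_expansionGens_le_or_eq_add_single_last (hss : StronglyStable I)
    (hg : g ∈ minGens I) {w : Fin (n + 1) →₀ ℕ}
    (hw : (monomial w 1 : MvPolynomial (Fin (n + 1)) K) ∈ I) :
    (∃ u ∈ expansionGens I g, u ≤ w) ∨ ∃ k, w = g + Finsupp.single (Fin.last n) k := by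
  obtain ⟨u, hu, huw⟩ := exists_mem_minGens_le hw
  by_cases hug : u = g
  swap
  · exact Or.inl ⟨u, Or.inl ⟨hu, hug⟩, huw⟩
  subst hug
  by_cases h : ∃ j : Fin (n + 1), (j : ℕ) < n ∧ u j < w j
  · obtain ⟨j, hj, hjw⟩ := h
    exact Or.inl (exists_expansionGens_le_of_apply_lt hss hg huw hj hjw)
  push Not at h
  refine Or.inr ⟨w (Fin.last n) - u (Fin.last n), Finsupp.ext fun a => ?_⟩
  rcases eq_or_ne a (Fin.last n) with rfl | ha
  · have := huw (Fin.last n)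
    simp only [Finsupp.add_apply, Finsupp.single_eq_same]
    omega
  · have := h a (Fin.val_lt_last ha)
    simp only [Finsupp.add_apply, Finsupp.single_eq_of_ne ha]
    have := huw a
    omega

end Expansion

open Module

section HilbertFunction

variable {K : Type} [Field K] {m : ℕ}

instance (d : ℕ) : FiniteDimensional K (homogeneousSubmodule (Fin m) K d) :=
  Module.Finite.iff_fg.mpr (homogeneousSubmodule_fg _ _ d)

lemma ker_quotient_mkₐ_toLinearMap (I : Ideal (MvPolynomial (Fin m) K)) :
    LinearMap.ker (Ideal.Quotient.mkₐ K I).toLinearMap = I.restrictScalars K := by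
  ext f
  simp [Ideal.Quotient.eq_zero_iff_mem]

lemma hfn_add_finrank_inf (I : Ideal (MvPolynomial (Fin m) K)) (d : ℕ) :
    hfn I d + finrank K ↥(homogeneousSubmodule (Fin m) K d ⊓ I.restrictScalars K) =
      finrank K (homogeneousSubmodule (Fin m) K d) := by
  set V := homogeneousSubmodule (Fin m) K d
  have :=
    LinearMap.finrank_range_add_finrank_ker ((Ideal.Quotient.mkₐ K I).toLinearMap.domRestrict V)
  rwa [LinearMap.range_domRestrict, LinearMap.ker_domRestrict, ker_quotient_mkₐ_toLinearMap,
    ← Submodule.finrank_map_subtype_eq, Submodule.map_comap_subtype] at this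

lemma homogeneousSubmodule_inf_le_sup_span_singleton {I J : Ideal (MvPolynomial (Fin m) K)}
    (hmon : IsMonomialIdeal I) {d : ℕ} {w : Fin m →₀ ℕ}
    (hJ : ∀ u : Fin m →₀ ℕ, u.degree = d →
      (monomial u 1 : MvPolynomial (Fin m) K) ∈ I → u ≠ w → (monomial u 1 : MvPolynomial (Fin m) K) ∈ J) :
    homogeneousSubmodule (Fin m) K d ⊓ I.restrictScalars K ≤
      homogeneousSubmodule (Fin m) K d ⊓ J.restrictScalars K ⊔ K ∙ monomial w 1 := by
  rintro f ⟨hfd, hfI⟩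
  rw [← support_sum_monomial_coeff f]
  refine Submodule.sum_mem _ fun u hu => ?_
  rw [← mul_one (coeff u f), ← smul_eq_mul, ← smul_monomial]
  refine Submodule.smul_mem _ _ ?_
  by_cases huw : u = w
  · exact Submodule.mem_sup_right (huw ▸ Submodule.mem_span_singleton_self _)
  · have hud : u.degree = d :=
      (((mem_homogeneousSubmodule d f).mp hfd).degree_eq_sum_deg_support hu).symm
    exact Submodule.mem_sup_left
      ⟨isHomogeneous_monomial 1 hud, hJ u hud (hmon f hfI u hu) huw⟩

lemma hfn_eq_hfn_add_one {I J : Ideal (MvPolynomial (Fin m) K)}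
    (hmon : IsMonomialIdeal I) (hJI : J ≤ I) {d : ℕ} {w : Fin m →₀ ℕ} (hwd : w.degree = d)
    (hwI : (monomial w 1 : MvPolynomial (Fin m) K) ∈ I)
    (hwJ : (monomial w 1 : MvPolynomial (Fin m) K) ∉ J)
    (hJ : ∀ u : Fin m →₀ ℕ, u.degree = d →
      (monomial u 1 : MvPolynomial (Fin m) K) ∈ I → u ≠ w → (monomial u 1 : MvPolynomial (Fin m) K) ∈ J) :
    hfn J d = hfn I d + 1 := by
  set V := homogeneousSubmodule (Fin m) K d
  set A := V ⊓ J.restrictScalars K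
  set B := K ∙ (monomial w 1 : MvPolynomial (Fin m) K)
  have hwV : (monomial w 1 : MvPolynomial (Fin m) K) ∈ V := isHomogeneous_monomial 1 hwd
  have hI : V ⊓ I.restrictScalars K = A ⊔ B := by
    refine le_antisymm (homogeneousSubmodule_inf_le_sup_span_singleton hmon hJ) (sup_le ?_ ?_)
    · exact inf_le_inf_left V hJI
    · exact (Submodule.span_singleton_le_iff_mem _ _).mpr ⟨hwV, hwI⟩
  have hAB : A ⊓ B = ⊥ := by
    refine (Submodule.eq_bot_iff _).mpr fun f ⟨⟨_, hfJ⟩, hfB⟩ => ?_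
    obtain ⟨c, rfl⟩ := Submodule.mem_span_singleton.mp hfB
    by_contra hc
    exact hwJ (((J.restrictScalars K).smul_mem_iff (left_ne_zero_of_smul hc)).mp hfJ)
  have hfinB : finrank K B = 1 := finrank_span_singleton fun h => hwJ (h ▸ J.zero_mem)
  have hsup := Submodule.finrank_sup_add_finrank_inf_eq A B
  have hfnI : hfn I d + finrank K ↥(A ⊔ B) = finrank K V := hI ▸ hfn_add_finrank_inf I d
  have hfnJ : hfn J d + finrank K A = finrank K V := hfn_add_finrank_inf J d
  rw [hAB, finrank_bot, hfinB] at hsup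
  omega

end HilbertFunction

/-- Expansion of a saturated strongly stable ideal at an expandable minimal generator `g`
increases the Hilbert polynomial of the quotient by exactly `1`. -/
theorem expansion_hilbert_polynomial {K : Type} [Field K] (n : ℕ)
    (I : Ideal (MvPolynomial (Fin (n + 1)) K))
    (hmon : IsMonomialIdeal I) (hss : StronglyStable I)
    (hsat : idealSat I (irrelevant (n + 1) K) = I)
    (g : Fin (n + 1) →₀ ℕ) (hg : g ∈ minGens I)
    (I' : Ideal (MvPolynomial (Fin (n + 1)) K))
    -- `I'` is the expansion of `I` at `g`
    (hI' : I' = Ideal.span ((fun u => (monomial u 1 : MvPolynomial (Fin (n + 1)) K)) ''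
      ((minGens I \ {g}) ∪
        {v | ∃ j : Fin (n + 1), (∀ i : Fin (n + 1), g i ≠ 0 → i ≤ j) ∧ (j : ℕ) < n ∧
          v = g + Finsupp.single j 1}))) :
    ∃ N : ℕ, ∀ i ≥ N, hfn I' i = hfn I i + 1 := by
  change I' = Ideal.span (_ '' expansionGens I g) at hI'
  subst hI'
  refine ⟨g.degree, fun d hd => ?_⟩
  refine hfn_eq_hfn_add_one hmon (span_expansionGens_le hg)
    (w := g + Finsupp.single (Fin.last n) (d - g.degree)) ?_
    (monomial_mem_of_le hg.1 le_self_add) ?_ fun u hud huI hne => ?_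
  · simp only [map_add, Finsupp.degree_single]
    omega
  · rw [monomial_mem_ideal_span_monomial_image_iff]
    rintro ⟨u, hu, hle⟩
    exact not_le_add_single_last_of_mem_expansionGens hss hsat hg hu _ hle
  · rcases exists_expansionGens_le_or_eq_add_single_last hss hg huI with h | ⟨k, rfl⟩
    · exact monomial_mem_ideal_span_monomial_image_iff.mpr h
    · simp only [map_add, Finsupp.degree_single] at hud
      exact absurd (by congr 2; omega) hne
end

section
/- Let I ⊂ S = K[x_0, ..., x_n] be a saturated Borel-fixed monomial ideal over an infinite field, and let Φ(I) = I · K[x_0, ..., x_n, x_{n+1}] be its extension (lift) to one more variable. Then Φ(I) is saturated with respect to the irrelevant ideal of K[x_0, ..., x_{n+1}], and Φ(I) is Borel-fixed. -/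
open MvPolynomial

/-!
Writing `K[x_0, …, x_{n+1}] = S[x_{n+1}]`, the lift `Φ(I)` consists of the polynomials in `x_{n+1}`
whose coefficients lie in `I`. Hence `f · x_{n+1}^k ∈ Φ(I)` forces `f ∈ Φ(I)`, and since `x_{n+1}^k`
lies in the `k`-th power of the irrelevant ideal, `Φ(I)` is saturated (for any ideal `I`).
An upper-triangular `γ` maps `x_0, …, x_n` into their span, acting there through its upper-left
block `γ'`, which is again upper triangular and invertible; so `γ · Φ(I) = Φ(γ' · I) = Φ(I)`.
-/

theorem Polynomial.mem_map_C_of_mul_X_pow_mem {R : Type*} [CommRing R] {I : Ideal R}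
    {f : Polynomial R} {k : ℕ} (h : f * Polynomial.X ^ k ∈ I.map Polynomial.C) :
    f ∈ I.map Polynomial.C := by
  rw [Ideal.mem_map_C_iff] at h ⊢
  intro d
  simpa only [Polynomial.coeff_mul_X_pow] using h (d + k)

theorem idealSat_eq_self_of_mul_pow_mem {R : Type} [CommRing R] {I J : Ideal R} {x : R}
    (hx : x ∈ J) (h : ∀ f k, f * x ^ k ∈ I → f ∈ I) : idealSat I J = I := by
  refine le_antisymm (iSup_le fun k f hf => h f k ?_) (le_iSup_of_le 0 fun f hf => ?_)
  · exact Submodule.mem_colon.mp hf _ (Ideal.pow_mem_pow hx k)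
  · exact Submodule.mem_colon.mpr fun p _ => I.mul_mem_right p hf

theorem X_mem_irrelevant {K : Type} [Field K] {m : ℕ} (i : Fin m) :
    (X i : MvPolynomial (Fin m) K) ∈ irrelevant m K :=
  Ideal.subset_span (Set.mem_range_self i)

section LastVariable

variable {R : Type*} [CommRing R] {m : ℕ}

variable (R m) in
noncomputable def finSuccLastEquiv :
    MvPolynomial (Fin (m + 1)) R ≃ₐ[R] Polynomial (MvPolynomial (Fin m) R) :=
  (renameEquiv R finSuccEquivLast).trans (optionEquivLeft R (Fin m))

theorem finSuccLastEquiv_rename_castSucc (p : MvPolynomial (Fin m) R) :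
    finSuccLastEquiv R m (rename Fin.castSucc p) = Polynomial.C p := by
  have h : (finSuccLastEquiv R m).toAlgHom.comp (rename Fin.castSucc) = Polynomial.CAlgHom :=
    algHom_ext fun j => by simp [finSuccLastEquiv, Polynomial.CAlgHom]
  exact DFunLike.congr_fun h p

theorem finSuccLastEquiv_X_last :
    finSuccLastEquiv R m (X (Fin.last m)) = Polynomial.X := by
  simp [finSuccLastEquiv]

theorem map_finSuccLastEquiv_map_rename_castSucc (I : Ideal (MvPolynomial (Fin m) R)) :
    (I.map (rename (R := R) Fin.castSucc).toRingHom).map (finSuccLastEquiv R m).toRingEquiv =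
      I.map Polynomial.C := by
  rw [← Ideal.map_coe, Ideal.map_map]
  congr 1
  exact RingHom.ext finSuccLastEquiv_rename_castSucc

theorem mem_map_rename_castSucc_of_mul_X_last_pow_mem {I : Ideal (MvPolynomial (Fin m) R)}
    {f : MvPolynomial (Fin (m + 1)) R} {k : ℕ}
    (h : f * X (Fin.last m) ^ k ∈ I.map (rename (R := R) Fin.castSucc).toRingHom) :
    f ∈ I.map (rename (R := R) Fin.castSucc).toRingHom := by
  rw [← Ideal.apply_mem_of_equiv_iff (f := (finSuccLastEquiv R m).toRingEquiv),
    map_finSuccLastEquiv_map_rename_castSucc] at h ⊢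
  rw [map_mul, map_pow] at h
  exact Polynomial.mem_map_C_of_mul_X_pow_mem (by simpa [finSuccLastEquiv_X_last] using h)

end LastVariable

section Borel

variable {K : Type} [Field K] {m : ℕ}

theorem UpperTriangular.submatrix {k : ℕ} {γ : Matrix (Fin m) (Fin m) K} (hγ : UpperTriangular γ)
    {f : Fin k → Fin m} (hf : StrictMono f) : UpperTriangular (γ.submatrix f f) :=
  fun _ _ hij => hγ _ _ (hf hij)

theorem UpperTriangular.isUnit_det_submatrix_castSucc {γ : Matrix (Fin (m + 1)) (Fin (m + 1)) K}
    (hγ : UpperTriangular γ) (hdet : IsUnit γ.det) :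
    IsUnit (γ.submatrix Fin.castSucc Fin.castSucc).det := by
  rw [Matrix.det_of_isUpperTriangular hγ, Fin.prod_univ_castSucc] at hdet
  rw [Matrix.det_of_isUpperTriangular (hγ.submatrix Fin.strictMono_castSucc)]
  exact isUnit_of_mul_isUnit_left hdet

theorem borelAct_comp_rename_castSucc {γ : Matrix (Fin (m + 1)) (Fin (m + 1)) K}
    (hγ : UpperTriangular γ) :
    (borelAct γ).comp (rename (R := K) Fin.castSucc).toRingHom =
      (rename (R := K) Fin.castSucc).toRingHom.comp
        (borelAct (γ.submatrix Fin.castSucc Fin.castSucc)) := by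
  refine MvPolynomial.ringHom_ext (fun a => by simp [borelAct]) fun j => ?_
  simp only [borelAct, RingHom.coe_comp, Function.comp_apply, AlgHom.toRingHom_eq_coe,
    RingHom.coe_coe, rename_X, aeval_X, map_sum, map_mul, rename_C]
  rw [Fin.sum_univ_castSucc]
  simp [hγ (Fin.last m) j.castSucc (Fin.castSucc_lt_last j), Matrix.submatrix_apply]

theorem BorelFixed.map_rename_castSucc {I : Ideal (MvPolynomial (Fin m) K)} (hI : BorelFixed I) :
    BorelFixed (I.map (rename (R := K) Fin.castSucc).toRingHom) := by
  intro γ hγ hdet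
  rw [Ideal.map_map, borelAct_comp_rename_castSucc hγ, ← Ideal.map_map,
    hI _ (hγ.submatrix Fin.strictMono_castSucc) (hγ.isUnit_det_submatrix_castSucc hdet)]

end Borel

theorem lift_saturated_borelFixed_general {K : Type} [Field K] (n : ℕ)
    (I : Ideal (MvPolynomial (Fin (n + 1)) K))
    (hbf : BorelFixed I)
    (Φ : Ideal (MvPolynomial (Fin (n + 2)) K))
    (hΦ : Φ = I.map (rename (Fin.castSucc : Fin (n + 1) → Fin (n + 2)) :
      MvPolynomial (Fin (n + 1)) K →ₐ[K] MvPolynomial (Fin (n + 2)) K).toRingHom) :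
    idealSat Φ (irrelevant (n + 2) K) = Φ ∧ BorelFixed Φ := by
  subst hΦ
  exact ⟨idealSat_eq_self_of_mul_pow_mem (X_mem_irrelevant (Fin.last (n + 1)))
    fun _ _ h => mem_map_rename_castSucc_of_mul_X_last_pow_mem h, hbf.map_rename_castSucc⟩

/-- The lift `Φ(I) = I·K[x_0, …, x_{n+1}]` of a saturated Borel-fixed monomial ideal over an
infinite field is saturated and Borel-fixed. -/
theorem lift_saturated_borelFixed {K : Type} [Field K] [Infinite K] (n : ℕ)
    (I : Ideal (MvPolynomial (Fin (n + 1)) K))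
    (hmon : IsMonomialIdeal I) (hbf : BorelFixed I)
    (hsat : idealSat I (irrelevant (n + 1) K) = I)
    (Φ : Ideal (MvPolynomial (Fin (n + 2)) K))
    (hΦ : Φ = I.map (rename (Fin.castSucc : Fin (n + 1) → Fin (n + 2)) :
      MvPolynomial (Fin (n + 1)) K →ₐ[K] MvPolynomial (Fin (n + 2)) K).toRingHom) :
    idealSat Φ (irrelevant (n + 2) K) = Φ ∧ BorelFixed Φ :=
  lift_saturated_borelFixed_general n I hbf Φ hΦ
end
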